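/- Let f(u,v) ∈ ℚ[u,v,u⁻¹,v⁻¹] be a homogeneous Laurent polynomial of degree r such that f(t, kt) ∈ ℤ[t, t⁻¹, 1/k] for all nonzero integers k. Then f(u,v) is a ℤ[u,u⁻¹,v⁻¹]-linear combination of the polynomials p_i(u,v) = (1/i!)·v(v-u)(v-2u)⋯(v-(i-1)u), i ≥ 1, together with 1. -/

import Mathlib

/-- The ring of two-variable Laurent polynomials `ℚ[u,v,u⁻¹,v⁻¹]`,
modeled as the monoid algebra of `ℤ × ℤ` over `ℚ` (exponents of `u` and `v`). -/
abbrev LaurentTwo : Type := AddMonoidAlgebra ℚ (ℤ × ℤ)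

/-- The variable `u`. -/
noncomputable def uVar : LaurentTwo := AddMonoidAlgebra.single ((1 : ℤ), (0 : ℤ)) 1

/-- The variable `v`. -/
noncomputable def vVar : LaurentTwo := AddMonoidAlgebra.single ((0 : ℤ), (1 : ℤ)) 1

/-- `p_i(u,v) = (1/i!)·v(v-u)(v-2u)⋯(v-(i-1)u)`; note `p_0 = 1`. -/
noncomputable def pPoly (i : ℕ) : LaurentTwo :=
  (i.factorial : ℚ)⁻¹ • ∏ j ∈ Finset.range i, (vVar - (j : ℚ) • uVar)

/-- The coefficient of `tⁿ` in `f(t, kt)`, for `f ∈ ℚ[u,v,u⁻¹,v⁻¹]`. -/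
noncomputable def substCoeff (f : LaurentTwo) (k : ℤ) (n : ℤ) : ℚ :=
  Finsupp.sum f.coeff fun ab c => if ab.1 + ab.2 = n then c * (k : ℚ) ^ ab.2 else 0

/-- `f(t,kt) ∈ ℤ[t,t⁻¹,1/k]` for all nonzero integers `k`: every coefficient of the
Laurent polynomial `f(t,kt)` lies in `ℤ[1/k]`. -/
def MemW (f : LaurentTwo) : Prop :=
  ∀ k : ℤ, k ≠ 0 → ∀ n : ℤ, ∃ (z : ℤ) (m : ℕ), substCoeff f k n = (z : ℚ) / (k : ℚ) ^ m

/-- An element of `ℚ[u,v,u⁻¹,v⁻¹]` lies in `ℤ[u,u⁻¹,v⁻¹]` iff its coefficients are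
integers and all exponents of `v` are nonpositive. -/
def MemZuv (g : LaurentTwo) : Prop :=
  ∀ ab ∈ g.coeff.support, (∃ z : ℤ, g.coeff ab = (z : ℚ)) ∧ ab.2 ≤ 0

/-! For `f` homogeneous of degree `r`, `f(t, kt) = tʳ f(1, k)`, and `k ↦ kᵉ f(1, k)` is a
polynomial `P` for suitable `e`. Clearing denominators, `b P(k) ∈ ℤ` for some integer `b ≠ 0`;
as also `P(k) ∈ ℤ[1/k]`, the denominator of `P(k)` divides `b` and a power of `k`, hence divides
`k^|b|`. So `H(x) = x^|b| P(x)` is integer-valued, and Newton's forward-difference formula writes it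
as an integer combination of the binomial polynomials `x(x-1)⋯(x-i+1)/i! = pᵢ(1, x)`. Rehomogenizing
`f(1, k) = k^(-E) H(k)` gives `f = ∑ zᵢ u^(r+E-i) v^(-E) pᵢ`, because homogeneous Laurent polynomials
of the same degree that agree at all points `(1, k)` are equal. -/

open Polynomial Finset AddMonoidAlgebra
open scoped LaurentPolynomial

theorem Nat.dvd_pow_self_of_dvd_pow {d a m : ℕ} (ha : a ≠ 0) (h : d ∣ a ^ m) : d ∣ a ^ d := by
  have hd : d ≠ 0 := by rintro rfl; exact pow_ne_zero m ha (zero_dvd_iff.mp h)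
  have hpow : ∀ e, a ^ e ≠ 0 := fun e => pow_ne_zero e ha
  rw [← Nat.factorization_le_iff_dvd hd (hpow _)] at h ⊢
  intro p
  specialize h p
  simp only [Nat.factorization_pow, Finsupp.smul_apply, smul_eq_mul] at h ⊢
  rcases Nat.eq_zero_or_pos (a.factorization p) with h0 | h0
  · rw [h0, mul_zero] at h ⊢
    exact h
  · exact (Nat.factorization_lt p hd).le.trans (Nat.le_mul_of_pos_right d h0)

theorem Rat.den_dvd_iff_mul_eq_int (q : ℚ) (n : ℤ) :
    (q.den : ℤ) ∣ n ↔ ∃ z : ℤ, (n : ℚ) * q = z := by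
  constructor
  · rintro ⟨c, rfl⟩
    exact ⟨c * q.num, by push_cast; rw [mul_comm (q.den : ℚ), mul_assoc, Rat.den_mul_eq_num]⟩
  · rintro ⟨z, hz⟩
    rcases eq_or_ne n 0 with rfl | hn
    · exact dvd_zero _
    · have hq : q = Rat.divInt z n := by
        rw [Rat.divInt_eq_div, ← hz, mul_div_cancel_left₀ _ (by exact_mod_cast hn)]
      simpa [← hq] using Rat.den_dvd z n

theorem Rat.exists_pow_natAbs_mul_eq_int {q : ℚ} {b k : ℤ} (hb : b ≠ 0) (hk : k ≠ 0)
    (hbq : ∃ z : ℤ, (b : ℚ) * q = z) (hkq : ∃ (z : ℤ) (m : ℕ), q = z / (k : ℚ) ^ m) :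
    ∃ z : ℤ, (k : ℚ) ^ b.natAbs * q = z := by
  obtain ⟨z, m, hq⟩ := hkq
  have hden_b : q.den ∣ b.natAbs := Int.natCast_dvd.mp ((q.den_dvd_iff_mul_eq_int b).mpr hbq)
  have hden_k : q.den ∣ k.natAbs ^ m := by
    rw [← Int.natAbs_pow, ← Int.natCast_dvd, q.den_dvd_iff_mul_eq_int]
    exact ⟨z, by rw [hq]; push_cast; field_simp⟩
  have hden : q.den ∣ k.natAbs ^ b.natAbs :=
    (Nat.dvd_pow_self_of_dvd_pow (Int.natAbs_ne_zero.mpr hk) hden_k).trans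
      (pow_dvd_pow _ (Nat.le_of_dvd (Int.natAbs_pos.mpr hb) hden_b))
  rw [← Int.natAbs_pow, ← Int.natCast_dvd, q.den_dvd_iff_mul_eq_int] at hden
  exact_mod_cast hden

theorem Polynomial.exists_int_mul_eval_eq_int (P : ℚ[X]) :
    ∃ b : ℤ, b ≠ 0 ∧ ∀ k : ℤ, ∃ z : ℤ, (b : ℚ) * P.eval (k : ℚ) = z := by
  obtain ⟨b, hb, hbP⟩ := IsLocalization.integerNormalization_spec (nonZeroDivisors ℤ) P
  refine ⟨b, nonZeroDivisors.ne_zero hb, fun k =>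
    ⟨(IsLocalization.integerNormalization (nonZeroDivisors ℤ) P).eval k, ?_⟩⟩
  have := congrArg (eval (k : ℚ)) hbP
  simpa only [algebraMap_int_eq, eval_intCast_map, eq_intCast, zsmul_eq_mul, eval_mul, eval_intCast,
    Int.cast_eq] using this.symm

theorem Polynomial.exists_eq_sum_descPochhammer_of_eval_nat_eq_int (H : ℚ[X])
    (hH : ∀ n : ℕ, ∃ z : ℤ, H.eval (n : ℚ) = z) :
    ∃ z : ℕ → ℤ,
      H = ∑ i ∈ range (H.natDegree + 1), C ((z i : ℚ) / i.factorial) * descPochhammer ℚ i := by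
  choose W hW using hH
  set d : ℕ → ℚ := fun i => (fwdDiff 1)^[i] H.eval 0 with hd
  have hd_int : ∀ i, ∃ z : ℤ, d i = z := fun i =>
    ⟨∑ j ∈ range (i + 1), (-1) ^ (i - j) * i.choose j * W j, by
      simp [hd, fwdDiff_iter_eq_sum_shift, hW]⟩
  have hd_zero : ∀ i, H.natDegree < i → d i = 0 := fun i hi =>
    congrFun (fwdDiff_iter_eq_zero_of_degree_lt hi) 0
  choose z hz using hd_int
  refine ⟨z, eq_of_infinite_eval_eq _ _
    ((Set.infinite_range_of_injective Nat.cast_injective).mono ?_)⟩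
  rintro _ ⟨n, rfl⟩
  have hNewton : H.eval (n : ℚ) = ∑ i ∈ range (n + 1), (n.choose i : ℚ) * d i := by
    simpa [hd] using shift_eq_sum_fwdDiff_iter 1 H.eval n 0
  have hΨ : (∑ i ∈ range (H.natDegree + 1), C ((z i : ℚ) / i.factorial) * descPochhammer ℚ i).eval
      (n : ℚ) = ∑ i ∈ range (H.natDegree + 1), (n.choose i : ℚ) * d i := by
    simp only [eval_finsetSum, eval_mul, eval_C]
    refine sum_congr rfl fun i _ => ?_
    rw [Nat.cast_choose_eq_descPochhammer_div, hz]
    ring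
  rw [Set.mem_ofPred_eq, hNewton, hΨ]
  calc ∑ i ∈ range (n + 1), (n.choose i : ℚ) * d i
      = ∑ i ∈ range (n + H.natDegree + 1), (n.choose i : ℚ) * d i :=
        sum_subset (range_subset_range.2 (by omega)) fun i _ hi => by
          rw [Nat.choose_eq_zero_of_lt (by simpa using hi), Nat.cast_zero, zero_mul]
    _ = ∑ i ∈ range (H.natDegree + 1), (n.choose i : ℚ) * d i :=
        (sum_subset (range_subset_range.2 (by omega)) fun i _ hi => by
          rw [hd_zero i (by simpa using hi), mul_zero]).symm

theorem LaurentPolynomial.eq_zero_of_eval₂_eq_zero {K : Type*} [Field K] [Infinite K]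
    {p : K[T;T⁻¹]} (h : ∀ x : Kˣ, eval₂ (RingHom.id K) x p = 0) : p = 0 := by
  obtain ⟨n, P, hP⟩ := p.exists_T_pow
  have hP0 : P = 0 := by
    refine eq_zero_of_infinite_isRoot P
      ((Set.infinite_univ.sdiff (Set.finite_singleton 0)).mono ?_)
    rintro x ⟨-, hx⟩
    have := congrArg (eval₂ (RingHom.id K) (Units.mk0 x hx)) hP
    rwa [eval₂_toLaurent, map_mul, h, zero_mul] at this
  rw [hP0, map_zero] at hP
  exact (isUnit_T n).mul_left_eq_zero.mp hP.symm

def totalDegree : ℤ × ℤ →+ ℤ := .coprod (.id ℤ) (.id ℤ)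

theorem mem_gradeBy_totalDegree_iff {F : LaurentTwo} {r : ℤ} :
    F ∈ gradeBy ℚ totalDegree r ↔ ∀ ab ∈ F.coeff.support, ab.1 + ab.2 = r := Iff.rfl

theorem pPoly_mem_gradeBy (i : ℕ) : pPoly i ∈ gradeBy ℚ totalDegree i := by
  have hfac : ∀ j ∈ range i, vVar - (j : ℚ) • uVar ∈ gradeBy ℚ totalDegree 1 := fun j _ =>
    sub_mem (single_mem_gradeBy _ _ _) (Submodule.smul_mem _ _ (single_mem_gradeBy _ _ _))
  rw [pPoly]
  simpa using Submodule.smul_mem _ _ (SetLike.prod_mem_graded _ (fun _ => (1 : ℤ)) _ hfac)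

theorem single_mul_pPoly_mem_gradeBy (r : ℤ) (E i : ℕ) (c : ℚ) :
    single (r + E - i, -(E : ℤ)) c * pPoly i ∈ gradeBy ℚ totalDegree r := by
  convert SetLike.GradedMul.mul_mem (single_mem_gradeBy totalDegree _ c) (pPoly_mem_gradeBy i)
  show r = (r + E - i + -E) + i
  ring

/-- `F(u, v) ↦ F(1, T)`. -/
noncomputable def dehomogenize : LaurentTwo →ₐ[ℚ] ℚ[T;T⁻¹] :=
  mapDomainAlgHom ℚ ℚ (AddMonoidHom.snd ℤ ℤ)

theorem dehomogenize_single (ab : ℤ × ℤ) (c : ℚ) :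
    dehomogenize (single ab c) = LaurentPolynomial.C c * LaurentPolynomial.T ab.2 := by
  rw [dehomogenize, mapDomainAlgHom_apply, mapDomain_single, ← LaurentPolynomial.single_eq_C_mul_T]
  rfl

theorem eq_zero_of_dehomogenize_eq_zero {F : LaurentTwo} {r : ℤ}
    (hF : F ∈ gradeBy ℚ totalDegree r) (h : dehomogenize F = 0) : F = 0 := by
  have hinj : Set.InjOn Prod.snd (totalDegree ⁻¹' {r}) := by
    rintro ⟨a, b⟩ (hab : a + b = r) ⟨a', b'⟩ (hab' : a' + b' = r) (rfl : b = b')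
    exact Prod.ext (by omega) rfl
  ext1
  refine Finsupp.mapDomain_injOn _ hinj hF (by simp) ?_
  simpa only [AddMonoidAlgebra.coeff_zero, Finsupp.mapDomain_zero, dehomogenize,
    mapDomainAlgHom_apply, AddMonoidHom.coe_snd, coeff_mapDomain] using congrArg AddMonoidAlgebra.coeff h

noncomputable def evalOneK (k : ℚˣ) : LaurentTwo →+* ℚ :=
  (LaurentPolynomial.eval₂ (RingHom.id ℚ) k).comp dehomogenize

theorem evalOneK_single (k : ℚˣ) (ab : ℤ × ℤ) (c : ℚ) :
    evalOneK k (single ab c) = c * (k : ℚ) ^ ab.2 := by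
  simp [evalOneK, dehomogenize_single]

theorem evalOneK_apply (k : ℚˣ) (F : LaurentTwo) :
    evalOneK k F = F.coeff.sum fun ab c => c * (k : ℚ) ^ ab.2 := by
  conv_lhs => rw [← sum_coeff_single F, map_finsuppSum]
  simp only [evalOneK_single]

theorem evalOneK_pPoly (k : ℚˣ) (i : ℕ) :
    evalOneK k (pPoly i) = (i.factorial : ℚ)⁻¹ * (descPochhammer ℚ i).eval (k : ℚ) := by
  simp [pPoly, map_rat_smul, uVar, vVar, evalOneK_single, descPochhammer_eval_eq_prod_range]

theorem substCoeff_eq_evalOneK {F : LaurentTwo} {r : ℤ} (hF : F ∈ gradeBy ℚ totalDegree r)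
    {k : ℤ} (hk : (k : ℚ) ≠ 0) : substCoeff F k r = evalOneK (Units.mk0 k hk) F := by
  rw [substCoeff, evalOneK_apply, Finsupp.sum, Finsupp.sum]
  exact sum_congr rfl fun ab hab => if_pos (mem_gradeBy_totalDegree_iff.mp hF ab hab)

theorem eq_zero_of_evalOneK_eq_zero {F : LaurentTwo} {r : ℤ} (hF : F ∈ gradeBy ℚ totalDegree r)
    (h : ∀ k, evalOneK k F = 0) : F = 0 :=
  eq_zero_of_dehomogenize_eq_zero hF (LaurentPolynomial.eq_zero_of_eval₂_eq_zero h)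

theorem exists_eval_eq_pow_mul_evalOneK (F : LaurentTwo) :
    ∃ (n : ℕ) (P : ℚ[X]), ∀ k : ℚˣ, P.eval (k : ℚ) = (k : ℚ) ^ n * evalOneK k F := by
  obtain ⟨n, P, hP⟩ := (dehomogenize F).exists_T_pow
  refine ⟨n, P, fun k => ?_⟩
  have := congrArg (LaurentPolynomial.eval₂ (RingHom.id ℚ) k) hP
  rw [LaurentPolynomial.eval₂_toLaurent, map_mul, LaurentPolynomial.eval₂_T_n] at this
  rw [mul_comm]
  exact this

theorem exists_intValued_eval_eq_pow_mul_evalOneK {f : LaurentTwo} {r : ℤ}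
    (hhom : f ∈ gradeBy ℚ totalDegree r) (hf : MemW f) :
    ∃ (E : ℕ) (H : ℚ[X]), (∀ n : ℕ, ∃ z : ℤ, H.eval (n : ℚ) = z) ∧
      ∀ k : ℚˣ, H.eval (k : ℚ) = (k : ℚ) ^ E * evalOneK k f := by
  obtain ⟨e, P, hP⟩ := exists_eval_eq_pow_mul_evalOneK f
  obtain ⟨b, hb, hbP⟩ := P.exists_int_mul_eval_eq_int
  refine ⟨b.natAbs + e, X ^ b.natAbs * P, fun n => ?_, fun k => by simp [hP, pow_add, mul_assoc]⟩
  rcases eq_or_ne (n : ℤ) 0 with hn | hn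
  · exact ⟨0, by simp [Int.natCast_eq_zero.mp hn, Int.natAbs_ne_zero.mpr hb]⟩
  have hnq : ((n : ℤ) : ℚ) ≠ 0 := Int.cast_ne_zero.mpr hn
  have hPn : ∃ (z : ℤ) (m : ℕ), P.eval ((n : ℤ) : ℚ) = z / ((n : ℤ) : ℚ) ^ m := by
    obtain ⟨z, m, hz⟩ := hf n hn r
    have hPn := hP (Units.mk0 _ hnq)
    rw [Units.val_mk0, ← substCoeff_eq_evalOneK hhom, hz] at hPn
    exact ⟨n ^ e * z, m, by rw [hPn]; push_cast; ring⟩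
  simpa using Rat.exists_pow_natAbs_mul_eq_int hb hn (hbP n) hPn

theorem memZuv_single {a b : ℤ} (hb : b ≤ 0) (z : ℤ) : MemZuv (single (a, b) (z : ℚ)) := by
  intro ab hab
  rw [coeff_single] at hab ⊢
  obtain rfl := Finset.mem_singleton.mp (Finsupp.support_single_subset hab)
  exact ⟨⟨z, by simp⟩, hb⟩

/-- A homogeneous Laurent polynomial `f(u,v)` of degree `r` with `f(t,kt) ∈ ℤ[t,t⁻¹,1/k]`
for all nonzero integers `k` is a `ℤ[u,u⁻¹,v⁻¹]`-linear combination of the `p_i`, `i ≥ 1`,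
together with `1 = p_0`. -/
theorem homogeneous_memW_is_comb_of_p (f : LaurentTwo) (r : ℤ)
    (hhom : ∀ ab ∈ f.coeff.support, ab.1 + ab.2 = r) (hf : MemW f) :
    ∃ (N : ℕ) (c : ℕ → LaurentTwo),
      (∀ i, MemZuv (c i)) ∧ f = ∑ i ∈ Finset.range (N + 1), c i * pPoly i := by
  have hf_mem : f ∈ gradeBy ℚ totalDegree r := mem_gradeBy_totalDegree_iff.mpr hhom
  obtain ⟨E, H, hHint, hH⟩ := exists_intValued_eval_eq_pow_mul_evalOneK hf_mem hf
  obtain ⟨z, hz⟩ := H.exists_eq_sum_descPochhammer_of_eval_nat_eq_int hHint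
  refine ⟨H.natDegree, fun i => single (r + E - i, -(E : ℤ)) (z i : ℚ),
    fun i => memZuv_single (by simp) (z i), ?_⟩
  rw [← sub_eq_zero]
  refine eq_zero_of_evalOneK_eq_zero (r := r)
    (sub_mem hf_mem (sum_mem fun i _ => single_mul_pPoly_mem_gradeBy r E i _)) fun k => ?_
  have hHk := congrArg (eval (k : ℚ)) hz
  rw [hH k, eval_finsetSum] at hHk
  rw [map_sub, map_sum, sub_eq_zero, ← mul_right_inj' (pow_ne_zero E k.ne_zero), hHk, mul_sum]
  refine sum_congr rfl fun i _ => ?_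
  rw [map_mul, evalOneK_single, evalOneK_pPoly, eval_mul, eval_C, zpow_neg, zpow_natCast]
  field_simp
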